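/- Let s_0, s_1, …, s_n ∈ ℝ with s_i > 0 for all 0 ≤ i ≤ n and s_0 + s_1 + ⋯ + s_n < 1. Let L(y) = ∑_{i=1}^n λ_i y_i with all λ_i ≠ 0. Then the integral ∫_{ℝ^n} (1 + |L(y)|)^{s_0 − 1} ∏_{i=1}^n |y_i|^{s_i − 1} dy is finite. -/

import Mathlib

/-!
Induct on `n`, integrating out one coordinate at a time; the inductive statement is the
translation-uniform bound `∫ (1 + |a + L(y)|)^{s₀-1} ∏ |yᵢ|^{sᵢ-1} dy ≤ C (1 + |a|)^{s₀+⋯+sₙ-1}`.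
Integrating out `y₁` turns `s₀` into `s₀ + s₁` by the one-variable estimate
`∫ |t|^{s-1} (1 + |a + t|)^{r-1} dt ≤ C(r,s) (1 + |a|)^{r+s-1}` (`r, s > 0`, `r + s < 1`).
For the latter split `ℝ` at the scale `M = (1 + |a|)/2`: where `|t| ≤ M` the second factor is at
most `M^{r-1}`, where `|a + t| ≤ M` the first is at most `M^{s-1}`, and elsewhere
`|t| < 3 |a + t|`, so the integrand is `O(|t|^{r+s-2})`. Each piece integrates to a multiple of
`M^{r+s-1}`.
-/

open MeasureTheory Set
open scoped ENNReal NNReal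

theorem lintegral_comp_abs {g : ℝ → ℝ≥0∞} (hg : Measurable g) :
    ∫⁻ t, g |t| = 2 * ∫⁻ x in Ioi 0, g x := by
  have h_split : (fun t => g |t|) =ᵐ[volume]
      fun t => (Ioi 0).indicator g t + (Ioi 0).indicator g (-t) := by
    filter_upwards [Measure.ae_ne volume 0] with t ht
    rcases ht.lt_or_gt with h | h
    · simp [h, h.not_gt, abs_of_neg h]
    · simp [h, h.le, abs_of_pos h]
  rw [lintegral_congr_ae h_split, lintegral_add_left (hg.indicator measurableSet_Ioi),
    lintegral_neg_eq_self fun t => (Ioi 0).indicator g t, lintegral_indicator measurableSet_Ioi,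
    two_mul]

theorem lintegral_comp_mul_left {f : ℝ → ℝ≥0∞} (hf : Measurable f) {c : ℝ} (hc : c ≠ 0) :
    ∫⁻ t, f (c * t) = ENNReal.ofReal |c⁻¹| * ∫⁻ t, f t := by
  rw [← lintegral_map hf (measurable_const_mul c), Real.map_volume_mul_left hc,
    lintegral_smul_measure, smul_eq_mul]

theorem lintegral_eq_lintegral_lintegral_fin_cons {α : Type*} [MeasureSpace α]
    [SigmaFinite (volume : Measure α)] {n : ℕ} {F : (Fin (n + 1) → α) → ℝ≥0∞}
    (hF : Measurable F) :
    ∫⁻ y, F y = ∫⁻ z : Fin n → α, ∫⁻ t : α, F (Fin.cons t z) := by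
  rw [← ((volume_preserving_piFinSuccAbove (fun _ : Fin (n + 1) => α) 0).symm).lintegral_comp hF,
    Measure.volume_eq_prod, lintegral_prod_symm _ (by fun_prop)]
  simp only [MeasurableEquiv.piFinSuccAbove_symm_apply, Fin.insertNthEquiv_zero]
  rfl

theorem lintegral_Ioc_rpow_sub_one {s : ℝ} (hs : 0 < s) {M : ℝ} (hM : 0 ≤ M) :
    ∫⁻ x in Ioc 0 M, ENNReal.ofReal (x ^ (s - 1)) = ENNReal.ofReal (M ^ s / s) := by
  rw [← ofReal_integral_eq_lintegral_ofReal
    (intervalIntegral.intervalIntegrable_rpow' (by linarith)).1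
    ((ae_restrict_mem measurableSet_Ioc).mono fun x hx => Real.rpow_nonneg hx.1.le _),
    ← intervalIntegral.integral_of_le hM, integral_rpow (Or.inl (by linarith)), sub_add_cancel,
    Real.zero_rpow hs.ne', sub_zero]

theorem lintegral_Ioi_rpow_sub_one {p : ℝ} (hp : p < 0) {M : ℝ} (hM : 0 < M) :
    ∫⁻ x in Ioi M, ENNReal.ofReal (x ^ (p - 1)) = ENNReal.ofReal (M ^ p / -p) := by
  rw [← ofReal_integral_eq_lintegral_ofReal (integrableOn_Ioi_rpow_of_lt (by linarith) hM)
    ((ae_restrict_mem measurableSet_Ioi).mono fun x hx => Real.rpow_nonneg (hM.trans hx).le _),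
    integral_Ioi_rpow_of_lt (by linarith) hM, sub_add_cancel, neg_div, div_neg]

section Pieces

variable {M : ℝ}

theorem lintegral_indicator_Iic_abs_rpow_sub_one {s : ℝ} (hs : 0 < s) (hM : 0 ≤ M) :
    ∫⁻ t, (Iic M).indicator (fun x => ENNReal.ofReal (x ^ (s - 1))) |t|
      = 2 * ENNReal.ofReal (M ^ s / s) := by
  rw [lintegral_comp_abs (Measurable.indicator (by fun_prop) measurableSet_Iic),
    setLIntegral_indicator measurableSet_Iic, Iic_inter_Ioi, lintegral_Ioc_rpow_sub_one hs hM]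

theorem lintegral_indicator_Iic_one_add_abs_rpow_sub_one_le {r : ℝ} (hr : 0 < r) (hr1 : r ≤ 1)
    (hM : 0 ≤ M) (a : ℝ) :
    ∫⁻ t, (Iic M).indicator (fun x => ENNReal.ofReal ((1 + x) ^ (r - 1))) |a + t|
      ≤ 2 * ENNReal.ofReal (M ^ r / r) := by
  rw [lintegral_add_left_eq_self
      (fun u => (Iic M).indicator (fun x => ENNReal.ofReal ((1 + x) ^ (r - 1))) |u|) a,
    lintegral_comp_abs (Measurable.indicator (by fun_prop) measurableSet_Iic),
    setLIntegral_indicator measurableSet_Iic, Iic_inter_Ioi, ← lintegral_Ioc_rpow_sub_one hr hM]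
  gcongr 2 * ?_
  refine setLIntegral_mono (by fun_prop) fun x hx => ?_
  exact ENNReal.ofReal_le_ofReal (Real.rpow_le_rpow_of_nonpos hx.1 (by linarith) (by linarith))

theorem lintegral_indicator_Ioi_abs_rpow_sub_one {p : ℝ} (hp : p < 0) (hM : 0 < M) :
    ∫⁻ t, (Ioi M).indicator (fun x => ENNReal.ofReal (x ^ (p - 1))) |t|
      = 2 * ENNReal.ofReal (M ^ p / -p) := by
  rw [lintegral_comp_abs (Measurable.indicator (by fun_prop) measurableSet_Ioi),
    setLIntegral_indicator measurableSet_Ioi, Ioi_inter_Ioi, max_eq_left hM.le,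
    lintegral_Ioi_rpow_sub_one hp hM]

end Pieces

noncomputable def decayKernel (r s a t : ℝ) : ℝ := |t| ^ (s - 1) * (1 + |a + t|) ^ (r - 1)

section DecayKernel

variable {r s a M t : ℝ}

theorem decayKernel_le_of_abs_le (hr : r ≤ 1) (hM : 2 * M = 1 + |a|) (ht : |t| ≤ M) :
    decayKernel r s a t ≤ M ^ (r - 1) * |t| ^ (s - 1) := by
  have hM0 : 0 < M := by linarith [abs_nonneg a]
  have hMle : M ≤ 1 + |a + t| := by
    have := abs_sub (a + t) t
    rw [add_sub_cancel_right] at this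
    linarith
  rw [decayKernel, mul_comm]
  exact mul_le_mul_of_nonneg_right (Real.rpow_le_rpow_of_nonpos hM0 hMle (by linarith))
    (by positivity)

theorem decayKernel_le_of_lt_abs (hs : s ≤ 1) (hM0 : 0 < M) (ht : M < |t|) :
    decayKernel r s a t ≤ M ^ (s - 1) * (1 + |a + t|) ^ (r - 1) :=
  mul_le_mul_of_nonneg_right (Real.rpow_le_rpow_of_nonpos hM0 ht.le (by linarith))
    (by positivity)

theorem decayKernel_le_of_lt_abs_of_lt_abs_add (hr : r ≤ 1) (hM : 2 * M = 1 + |a|)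
    (ht : M < |t|) (hat : M < |a + t|) :
    decayKernel r s a t ≤ 3 ^ (1 - r) * |t| ^ (r + s - 1 - 1) := by
  have ht0 : 0 < |t| := by linarith [abs_nonneg a]
  have h3 : |t| / 3 ≤ 1 + |a + t| := by
    have := abs_sub (a + t) a
    rw [add_sub_cancel_left] at this
    linarith
  calc decayKernel r s a t ≤ |t| ^ (s - 1) * (|t| / 3) ^ (r - 1) :=
        mul_le_mul_of_nonneg_left (Real.rpow_le_rpow_of_nonpos (by positivity) h3 (by linarith))
          (by positivity)
    _ = 3 ^ (1 - r) * |t| ^ (r + s - 1 - 1) := by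
        rw [Real.div_rpow ht0.le (by norm_num), show r + s - 1 - 1 = s - 1 + (r - 1) by ring,
          Real.rpow_add ht0, show (1 : ℝ) - r = -(r - 1) by ring, Real.rpow_neg (by norm_num)]
        ring

/- The middle piece keeps `(1 + x) ^ (r - 1)`: with `0 ^ (r - 1) = 0` in Lean, the bound by
`|a + t| ^ (r - 1)` would fail at `t = -a`. -/
theorem ofReal_decayKernel_le (hr : r ≤ 1) (hs : s ≤ 1) (hM : 2 * M = 1 + |a|) (t : ℝ) :
    ENNReal.ofReal (decayKernel r s a t) ≤
      ENNReal.ofReal (M ^ (r - 1)) * (Iic M).indicator (fun x => ENNReal.ofReal (x ^ (s - 1))) |t|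
      + ENNReal.ofReal (M ^ (s - 1)) *
          (Iic M).indicator (fun x => ENNReal.ofReal ((1 + x) ^ (r - 1))) |a + t|
      + ENNReal.ofReal (3 ^ (1 - r)) *
          (Ioi M).indicator (fun x => ENNReal.ofReal (x ^ (r + s - 1 - 1))) |t| := by
  have hM0 : 0 < M := by linarith [abs_nonneg a]
  rcases le_or_gt |t| M with ht | ht
  · rw [indicator_of_mem (mem_Iic.2 ht), ← ENNReal.ofReal_mul (by positivity)]
    exact le_add_right (le_add_right (ENNReal.ofReal_le_ofReal (decayKernel_le_of_abs_le hr hM ht)))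
  rcases le_or_gt |a + t| M with hat | hat
  · rw [indicator_of_mem (mem_Iic.2 hat), ← ENNReal.ofReal_mul (by positivity)]
    exact le_add_right (le_add_left (ENNReal.ofReal_le_ofReal (decayKernel_le_of_lt_abs hs hM0 ht)))
  · rw [indicator_of_mem (mem_Ioi.2 ht), ← ENNReal.ofReal_mul (by positivity)]
    exact le_add_left (ENNReal.ofReal_le_ofReal
      (decayKernel_le_of_lt_abs_of_lt_abs_add hr hM ht hat))

theorem lintegral_decayKernel_le (hr : 0 < r) (hs : 0 < s) (hrs : r + s < 1) (a : ℝ) :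
    ∫⁻ t, ENNReal.ofReal (decayKernel r s a t) ≤
      ENNReal.ofReal (2 * (1 / s + 1 / r + 3 ^ (1 - r) / (1 - (r + s))) *
        ((1 + |a|) / 2) ^ (r + s - 1)) := by
  set M := (1 + |a|) / 2 with hM_def
  have hM : 2 * M = 1 + |a| := by rw [hM_def]; ring
  have hM0 : 0 < M := by positivity
  have hδ : 0 < 1 - (r + s) := by linarith
  set A := (Iic M).indicator fun x => ENNReal.ofReal (x ^ (s - 1))
  set B := (Iic M).indicator fun x => ENNReal.ofReal ((1 + x) ^ (r - 1))
  set C := (Ioi M).indicator fun x => ENNReal.ofReal (x ^ (r + s - 1 - 1))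
  have hA_meas : Measurable A := Measurable.indicator (by fun_prop) measurableSet_Iic
  have hB_meas : Measurable B := Measurable.indicator (by fun_prop) measurableSet_Iic
  have hC_meas : Measurable C := Measurable.indicator (by fun_prop) measurableSet_Ioi
  have h_total : 2 * (1 / s + 1 / r + 3 ^ (1 - r) / (1 - (r + s))) * M ^ (r + s - 1) =
      M ^ (r - 1) * (2 * (M ^ s / s)) + M ^ (s - 1) * (2 * (M ^ r / r))
        + 3 ^ (1 - r) * (2 * (M ^ (r + s - 1) / (1 - (r + s)))) := by
    have e₁ : M ^ (r - 1) * M ^ s = M ^ (r + s - 1) := by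
      rw [← Real.rpow_add hM0]; ring_nf
    have e₂ : M ^ (s - 1) * M ^ r = M ^ (r + s - 1) := by
      rw [← Real.rpow_add hM0]; ring_nf
    linear_combination (-2 / s) * e₁ + (-2 / r) * e₂
  calc ∫⁻ t, ENNReal.ofReal (decayKernel r s a t)
      ≤ ∫⁻ t, (ENNReal.ofReal (M ^ (r - 1)) * A |t| + ENNReal.ofReal (M ^ (s - 1)) * B |a + t|
          + ENNReal.ofReal (3 ^ (1 - r)) * C |t|) :=
        lintegral_mono (ofReal_decayKernel_le (by linarith) (by linarith) hM)
    _ = ENNReal.ofReal (M ^ (r - 1)) * (∫⁻ t, A |t|)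
          + ENNReal.ofReal (M ^ (s - 1)) * (∫⁻ t, B |a + t|)
          + ENNReal.ofReal (3 ^ (1 - r)) * ∫⁻ t, C |t| := by
        rw [lintegral_add_left (by fun_prop), lintegral_add_left (by fun_prop),
          lintegral_const_mul _ (by fun_prop), lintegral_const_mul _ (by fun_prop),
          lintegral_const_mul _ (by fun_prop)]
    _ ≤ ENNReal.ofReal (M ^ (r - 1)) * (2 * ENNReal.ofReal (M ^ s / s))
          + ENNReal.ofReal (M ^ (s - 1)) * (2 * ENNReal.ofReal (M ^ r / r))
          + ENNReal.ofReal (3 ^ (1 - r)) *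
              (2 * ENNReal.ofReal (M ^ (r + s - 1) / (1 - (r + s)))) := by
        rw [lintegral_indicator_Iic_abs_rpow_sub_one hs hM0.le,
          lintegral_indicator_Ioi_abs_rpow_sub_one (by linarith) hM0, neg_sub]
        gcongr
        exact lintegral_indicator_Iic_one_add_abs_rpow_sub_one_le hr (by linarith) hM0.le a
    _ = _ := by
        rw [h_total, ENNReal.ofReal_add (by positivity) (by positivity),
          ENNReal.ofReal_add (by positivity) (by positivity)]
        simp (disch := positivity) only [ENNReal.ofReal_mul, ENNReal.ofReal_ofNat]

end DecayKernel

theorem exists_lintegral_abs_rpow_mul_one_add_abs_rpow_le {r s lam : ℝ} (hr : 0 < r) (hs : 0 < s)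
    (hrs : r + s < 1) (hlam : lam ≠ 0) :
    ∃ C : ℝ≥0, ∀ a : ℝ,
      ∫⁻ t, ENNReal.ofReal (|t| ^ (s - 1) * (1 + |a + lam * t|) ^ (r - 1))
        ≤ C * ENNReal.ofReal ((1 + |a|) ^ (r + s - 1)) := by
  set K := 2 * (1 / s + 1 / r + 3 ^ (1 - r) / (1 - (r + s)))
  refine ⟨(|lam| ^ (1 - s) * |lam⁻¹| * (K / 2 ^ (r + s - 1))).toNNReal, fun a => ?_⟩
  have hlam0 : 0 < |lam| := abs_pos.2 hlam
  have hδ : 0 < 1 - (r + s) := by linarith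
  have h_scale : ∀ t, |t| ^ (s - 1) * (1 + |a + lam * t|) ^ (r - 1)
      = |lam| ^ (1 - s) * decayKernel r s a (lam * t) := fun t => by
    rw [decayKernel, abs_mul, Real.mul_rpow hlam0.le (abs_nonneg t), ← mul_assoc, ← mul_assoc,
      ← Real.rpow_add hlam0, sub_add_sub_cancel', sub_self, Real.rpow_zero, one_mul]
  have h_meas : Measurable fun u => ENNReal.ofReal (decayKernel r s a u) := by
    unfold decayKernel; fun_prop
  calc ∫⁻ t, ENNReal.ofReal (|t| ^ (s - 1) * (1 + |a + lam * t|) ^ (r - 1))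
      = ENNReal.ofReal (|lam| ^ (1 - s)) *
          ∫⁻ t, ENNReal.ofReal (decayKernel r s a (lam * t)) := by
        simp_rw [h_scale, ENNReal.ofReal_mul (by positivity : 0 ≤ |lam| ^ (1 - s))]
        exact lintegral_const_mul _ (h_meas.comp (measurable_const_mul lam))
    _ = ENNReal.ofReal (|lam| ^ (1 - s)) * (ENNReal.ofReal |lam⁻¹| *
          ∫⁻ t, ENNReal.ofReal (decayKernel r s a t)) := by
        rw [lintegral_comp_mul_left h_meas hlam]
    _ ≤ ENNReal.ofReal (|lam| ^ (1 - s)) * (ENNReal.ofReal |lam⁻¹| *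
          ENNReal.ofReal (K * ((1 + |a|) / 2) ^ (r + s - 1))) := by
        gcongr
        exact lintegral_decayKernel_le hr hs hrs a
    _ = _ := by
        change _ = ENNReal.ofReal _ * _
        rw [← ENNReal.ofReal_mul (by positivity), ← ENNReal.ofReal_mul (by positivity),
          ← ENNReal.ofReal_mul (by positivity), Real.div_rpow (by positivity) (by positivity)]
        ring_nf

theorem lintegral_one_add_abs_rpow_mul_le {r s lam : ℝ} {C : ℝ≥0}
    (h : ∀ a : ℝ, ∫⁻ t, ENNReal.ofReal (|t| ^ (s - 1) * (1 + |a + lam * t|) ^ (r - 1))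
      ≤ C * ENNReal.ofReal ((1 + |a|) ^ (r + s - 1)))
    (a b : ℝ) {P : ℝ} (hP : 0 ≤ P) :
    ∫⁻ t, ENNReal.ofReal ((1 + |a + (lam * t + b)|) ^ (r - 1) * (|t| ^ (s - 1) * P))
      ≤ C * ENNReal.ofReal ((1 + |a + b|) ^ (r + s - 1) * P) := by
  calc ∫⁻ t, ENNReal.ofReal ((1 + |a + (lam * t + b)|) ^ (r - 1) * (|t| ^ (s - 1) * P))
      = (∫⁻ t, ENNReal.ofReal (|t| ^ (s - 1) * (1 + |a + b + lam * t|) ^ (r - 1)))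
          * ENNReal.ofReal P := by
        rw [← lintegral_mul_const _ (by fun_prop)]
        refine lintegral_congr fun t => ?_
        rw [← ENNReal.ofReal_mul' hP, show a + (lam * t + b) = a + b + lam * t by ring]
        ring_nf
    _ ≤ C * ENNReal.ofReal ((1 + |a + b|) ^ (r + s - 1)) * ENNReal.ofReal P := by
        gcongr
        exact h (a + b)
    _ = _ := by rw [mul_assoc, ← ENNReal.ofReal_mul (by positivity)]

theorem exists_lintegral_linear_form_decay_le (n : ℕ) {s0 : ℝ} {s lam : Fin n → ℝ}
    (hs0 : 0 < s0) (hs : ∀ i, 0 < s i) (hsum : s0 + ∑ i, s i < 1) (hlam : ∀ i, lam i ≠ 0) :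
    ∃ C : ℝ≥0, ∀ a : ℝ,
      ∫⁻ y : Fin n → ℝ,
        ENNReal.ofReal ((1 + |a + ∑ i, lam i * y i|) ^ (s0 - 1) * ∏ i, |y i| ^ (s i - 1))
        ≤ C * ENNReal.ofReal ((1 + |a|) ^ (s0 + ∑ i, s i - 1)) := by
  induction n generalizing s0 with
  | zero => exact ⟨1, fun a => by simp [volume_pi]⟩
  | succ n ih =>
    rw [Fin.sum_univ_succ, ← add_assoc] at hsum ⊢
    have h_tail : 0 ≤ ∑ i : Fin n, s i.succ := Finset.sum_nonneg fun i _ => (hs i.succ).le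
    obtain ⟨C₁, h₁⟩ := exists_lintegral_abs_rpow_mul_one_add_abs_rpow_le hs0 (hs 0)
      (by linarith) (hlam 0)
    obtain ⟨C₂, h₂⟩ := ih (s := fun i => s i.succ) (lam := fun i => lam i.succ)
      (by linarith [hs 0]) (fun i => hs i.succ) hsum (fun i => hlam i.succ)
    refine ⟨C₁ * C₂, fun a => ?_⟩
    rw [lintegral_eq_lintegral_lintegral_fin_cons (by fun_prop)]
    simp only [Fin.sum_univ_succ, Fin.prod_univ_succ, Fin.cons_zero, Fin.cons_succ]
    calc _ ≤ ∫⁻ z : Fin n → ℝ, C₁ * ENNReal.ofReal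
            ((1 + |a + ∑ i : Fin n, lam i.succ * z i|) ^ (s0 + s 0 - 1)
              * ∏ i : Fin n, |z i| ^ (s i.succ - 1)) :=
          lintegral_mono fun z => lintegral_one_add_abs_rpow_mul_le h₁ a _
            (Finset.prod_nonneg fun i _ => by positivity)
      _ ≤ C₁ * (C₂ * ENNReal.ofReal ((1 + |a|) ^ (s0 + s 0 + ∑ i : Fin n, s i.succ - 1))) := by
          rw [lintegral_const_mul _ (by fun_prop)]
          gcongr
          exact h₂ a
      _ = _ := by rw [ENNReal.coe_mul, mul_assoc]

/-- if `s_0, …, s_n > 0` with `s_0 + ⋯ + s_n < 1` and `L(y) = ∑ λ_i y_i` has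
all coefficients nonzero, then `∫_{ℝ^n} (1+|L(y)|)^{s_0-1} ∏ |y_i|^{s_i-1} dy < ∞`. -/
theorem lintegral_decay_linear_form_finite
    (n : ℕ) (s0 : ℝ) (s : Fin n → ℝ)
    (hs0 : 0 < s0) (hs : ∀ i, 0 < s i) (hsum : s0 + ∑ i, s i < 1)
    (lam : Fin n → ℝ) (hlam : ∀ i, lam i ≠ 0) :
    ∫⁻ y : Fin n → ℝ,
      ENNReal.ofReal ((1 + |∑ i, lam i * y i|) ^ (s0 - 1) * ∏ i, |y i| ^ (s i - 1))
      ≠ ⊤ := by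
  obtain ⟨C, hC⟩ := exists_lintegral_linear_form_decay_le n hs0 hs hsum hlam
  have h := hC 0
  simp only [zero_add, abs_zero, add_zero, Real.one_rpow, ENNReal.ofReal_one, mul_one] at h
  exact ne_top_of_le_ne_top ENNReal.coe_ne_top h
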